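/- arXiv:math/0110006 — 5 statements merged into one kernel-verified Lean document; each statement's English description precedes it below -/
import Mathlib

section
/- For every natural number r, the Fibonacci number f_{2r} admits the two 5-periodic alternating Catalan-number expansions f_{2r} = \sum_{s \in \mathbb{Z}} C(2r, r-1+5s) and f_{2r} = \sum_{s \in \mathbb{Z}} C(2r+1, r-1+5s) (each sum has only finitely many nonzero terms). -/
/-- `binZ n j` is the binomial coefficient `n choose j` for `j : ℤ`, which is `0`
unless `0 ≤ j ≤ n`. -/
def binZ (n : ℕ) (j : ℤ) : ℤ := if 0 ≤ j then (n.choose j.toNat : ℤ) else 0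

/-- `catC n j = C(n,j) = binom(n,j) - binom(n,j-1)`. -/
def catC (n : ℕ) (j : ℤ) : ℤ := binZ n j - binZ n (j - 1)

lemma binZ_eq_zero {n : ℕ} {j : ℤ} (h : j < 0 ∨ (n : ℤ) < j) : binZ n j = 0 := by
  rcases h with h | h
  · simp [binZ, not_le.mpr h]
  · have h0 : 0 ≤ j := le_trans (Int.ofNat_nonneg n) h.le
    have : n < j.toNat := by omega
    simp [binZ, h0, Nat.choose_eq_zero_of_lt this]

lemma catC_ne_zero_bounds {n : ℕ} {j : ℤ} (h : catC n j ≠ 0) :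
    0 ≤ j ∧ j ≤ (n : ℤ) + 1 := by
  by_contra hc
  apply h
  have h1 : binZ n j = 0 := binZ_eq_zero (by omega)
  have h2 : binZ n (j - 1) = 0 := binZ_eq_zero (by omega)
  simp [catC, h1, h2]

lemma binZ_pascal (n : ℕ) (j : ℤ) : binZ (n + 1) j = binZ n j + binZ n (j - 1) := by
  rcases lt_or_ge j 0 with h | h
  · rw [binZ_eq_zero (Or.inl h), binZ_eq_zero (Or.inl h), binZ_eq_zero (Or.inl (by omega))]
    ring
  · rcases eq_or_lt_of_le h with h0 | h0
    · rw [← h0]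
      rw [binZ_eq_zero (n := n) (j := (0:ℤ) - 1) (Or.inl (by norm_num))]
      simp [binZ]
    · have h1 : (0:ℤ) ≤ j - 1 := by omega
      have hk : ∃ k : ℕ, j = (k : ℤ) + 1 := ⟨(j - 1).toNat, by omega⟩
      obtain ⟨k, rfl⟩ := hk
      have e1 : ((k : ℤ) + 1).toNat = k + 1 := by omega
      have e2 : ((k : ℤ) + 1 - 1).toNat = k := by omega
      simp only [binZ, if_pos h, if_pos h1, e1, e2]
      rw [Nat.choose_succ_succ]
      push_cast
      ring

lemma catC_pascal (n : ℕ) (j : ℤ) : catC (n + 1) j = catC n j + catC n (j - 1) := by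
  simp only [catC, binZ_pascal]
  ring

/-- The 5-periodic sum. -/
noncomputable def T (n : ℕ) (a : ℤ) : ℤ := ∑ᶠ s : ℤ, catC n (a + 5 * s)

lemma T_support_finite (n : ℕ) (a : ℤ) :
    (Function.support fun s : ℤ => catC n (a + 5 * s)).Finite := by
  apply Set.Finite.subset (Set.finite_Icc (-(a.natAbs + n + 2) : ℤ) (a.natAbs + n + 2))
  intro s hs
  have := catC_ne_zero_bounds hs
  have h1 : (a.natAbs : ℤ) = |a| := Int.abs_eq_natAbs a ▸ rfl
  simp only [Set.mem_Icc]
  have h2 : -|a| ≤ a ∧ a ≤ |a| := ⟨neg_abs_le a, le_abs_self a⟩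
  omega

lemma T_pascal (n : ℕ) (a : ℤ) : T (n + 1) a = T n a + T n (a - 1) := by
  unfold T
  rw [← finsum_add_distrib (T_support_finite n a) (T_support_finite n (a - 1))]
  apply finsum_congr
  intro s
  rw [catC_pascal]
  congr 2
  ring

lemma T_period (n : ℕ) (a : ℤ) : T n (a + 5) = T n a := by
  unfold T
  rw [← finsum_comp_equiv (Equiv.addRight (1 : ℤ)) (f := fun s : ℤ => catC n (a + 5 * s))]
  apply finsum_congr
  intro s
  simp only [Equiv.coe_addRight]
  congr 1
  ring

lemma catC_zero (j : ℤ) : catC 0 j = if j = 0 then 1 else if j = 1 then -1 else 0 := by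
  rcases eq_or_ne j 0 with rfl | h0
  · simp [catC, binZ, binZ_eq_zero (n := 0) (j := (0:ℤ) - 1) (Or.inl (by norm_num))]
  · rcases eq_or_ne j 1 with rfl | h1
    · have : binZ 0 1 = 0 := binZ_eq_zero (Or.inr (by norm_num))
      simp [catC, this, binZ]
    · have hb : binZ 0 j = 0 := binZ_eq_zero (by omega)
      have hb' : binZ 0 (j - 1) = 0 := binZ_eq_zero (by omega)
      simp [catC, hb, hb', h0, h1]

lemma T_zero0 : T 0 0 = 1 := by
  unfold T
  rw [finsum_eq_single _ (0 : ℤ)]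
  · simp [catC_zero]
  · intro s hs
    rw [catC_zero]
    have h1 : ¬ ((0:ℤ) + 5 * s = 0) := by omega
    have h2 : ¬ ((0:ℤ) + 5 * s = 1) := by omega
    rw [if_neg h1, if_neg h2]

lemma T_zero1 : T 0 1 = -1 := by
  unfold T
  rw [finsum_eq_single _ (0 : ℤ)]
  · simp [catC_zero]
  · intro s hs
    rw [catC_zero]
    have h1 : ¬ ((1:ℤ) + 5 * s = 0) := by omega
    have h2 : ¬ ((1:ℤ) + 5 * s = 1) := by omega
    rw [if_neg h1, if_neg h2]

lemma T_zero_ne (a : ℤ) (h : a % 5 = 2 ∨ a % 5 = 3 ∨ a % 5 = 4) : T 0 a = 0 := by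
  unfold T
  apply finsum_eq_zero_of_forall_eq_zero
  intro s
  rw [catC_zero]
  have h1 : ¬ (a + 5 * s = 0) := by omega
  have h2 : ¬ (a + 5 * s = 1) := by omega
  simp [h1, h2]

lemma main (r : ℕ) :
    T (2 * r) ((r : ℤ) - 1) = Nat.fib (2 * r) ∧
    T (2 * r) (r : ℤ) = (Nat.fib (2 * r + 1) : ℤ) - Nat.fib (2 * r) ∧
    T (2 * r) ((r : ℤ) + 1) = -((Nat.fib (2 * r + 1) : ℤ) - Nat.fib (2 * r)) ∧
    T (2 * r) ((r : ℤ) + 2) = -(Nat.fib (2 * r) : ℤ) ∧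
    T (2 * r) ((r : ℤ) + 3) = 0 := by
  induction r with
  | zero =>
    refine ⟨?_, ?_, ?_, ?_, ?_⟩ <;> norm_num <;>
      first
        | rw [T_zero_ne (-1) (by decide)]
        | rw [T_zero_ne 2 (by decide)]
        | rw [T_zero_ne 3 (by decide)]
        | exact T_zero0
        | exact T_zero1
  | succ r ih =>
    obtain ⟨h1, h2, h3, h4, h5⟩ := ih
    have key : ∀ b : ℤ, T (2 * (r + 1)) b =
        T (2 * r) b + 2 * T (2 * r) (b - 1) + T (2 * r) (b - 2) := by
      intro b
      have e : 2 * (r + 1) = (2 * r + 1) + 1 := by ring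
      rw [e, T_pascal, T_pascal, T_pascal]
      ring
    have p1 : T (2 * r) ((r : ℤ) - 2) = 0 := by
      have hp := T_period (2 * r) ((r : ℤ) - 2)
      rw [show (r : ℤ) - 2 + 5 = (r : ℤ) + 3 by ring] at hp
      exact hp.symm.trans h5
    have p2 : T (2 * r) ((r : ℤ) + 4) = T (2 * r) ((r : ℤ) - 1) := by
      have hp := T_period (2 * r) ((r : ℤ) - 1)
      rw [show (r : ℤ) - 1 + 5 = (r : ℤ) + 4 by ring] at hp
      exact hp
    have f1 : (Nat.fib (2 * (r + 1)) : ℤ) = Nat.fib (2 * r) + Nat.fib (2 * r + 1) := by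
      have e : 2 * (r + 1) = (2 * r) + 2 := by ring
      rw [e, Nat.fib_add_two]
      push_cast
      ring
    have f2 : (Nat.fib (2 * (r + 1) + 1) : ℤ) =
        Nat.fib (2 * r) + 2 * Nat.fib (2 * r + 1) := by
      have e : 2 * (r + 1) + 1 = (2 * r + 1) + 2 := by ring
      rw [e, Nat.fib_add_two, show 2 * r + 1 + 1 = 2 * r + 2 from rfl, Nat.fib_add_two]
      push_cast
      ring
    refine ⟨?_, ?_, ?_, ?_, ?_⟩ <;> push_cast
    · rw [show (r : ℤ) + 1 - 1 = (r : ℤ) by ring, key, h2, h1, p1, f1]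
      ring
    · rw [key, show (r : ℤ) + 1 - 1 = (r : ℤ) by ring,
        show (r : ℤ) + 1 - 2 = (r : ℤ) - 1 by ring, h3, h2, h1, f1, f2]
      ring
    · rw [show (r : ℤ) + 1 + 1 = (r : ℤ) + 2 by ring,
        key, show (r : ℤ) + 2 - 1 = (r : ℤ) + 1 by ring,
        show (r : ℤ) + 2 - 2 = (r : ℤ) by ring, h4, h3, h2, f1, f2]
      ring
    · rw [show (r : ℤ) + 1 + 2 = (r : ℤ) + 3 by ring,
        key, show (r : ℤ) + 3 - 1 = (r : ℤ) + 2 by ring,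
        show (r : ℤ) + 3 - 2 = (r : ℤ) + 1 by ring, h5, h4, h3, f1]
      ring
    · rw [show (r : ℤ) + 1 + 3 = (r : ℤ) + 4 by ring,
        key, show (r : ℤ) + 4 - 1 = (r : ℤ) + 3 by ring,
        show (r : ℤ) + 4 - 2 = (r : ℤ) + 2 by ring, p2, h1, h5, h4]
      ring

/-- For every natural number `r`, the Fibonacci number `f_{2r}` admits the two
5-periodic alternating Catalan-number expansions
`f_{2r} = ∑_{s ∈ ℤ} C(2r, r-1+5s)` and `f_{2r} = ∑_{s ∈ ℤ} C(2r+1, r-1+5s)`. -/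
theorem fib_even_catalan_expansions (r : ℕ) :
    ((Nat.fib (2 * r) : ℤ) = ∑ᶠ s : ℤ, catC (2 * r) ((r : ℤ) - 1 + 5 * s)) ∧
    ((Nat.fib (2 * r) : ℤ) = ∑ᶠ s : ℤ, catC (2 * r + 1) ((r : ℤ) - 1 + 5 * s)) := by
  obtain ⟨h1, _, _, _, h5⟩ := main r
  constructor
  · exact h1.symm
  · have := T_pascal (2 * r) ((r : ℤ) - 1)
    have hper : T (2 * r) ((r : ℤ) - 1 - 1) = T (2 * r) ((r : ℤ) + 3) := by
      have := T_period (2 * r) ((r : ℤ) - 1 - 1)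
      rw [show (r : ℤ) - 1 - 1 + 5 = (r : ℤ) + 3 by ring] at this
      exact this.symm
    show (Nat.fib (2 * r) : ℤ) = T (2 * r + 1) ((r : ℤ) - 1)
    rw [this, h1, hper, h5, add_zero]
end

section
/- Let p be an odd prime. Then \sum_{j=0}^{(p-3)/2} n_j \cdot P_j\big(4\cos^2(\pi/(2p)) - 2\big) = \dfrac{p}{4 \sin^2(\pi/p)}, an identity of real numbers; equivalently, R_p(\|\mathbf{f}_p\|) = \|\mathbf{F}_p\| where \|\mathbf{f}_p\| = 4\cos^2(\pi/(2p)) and \|\mathbf{F}_p\| = p/(4\sin^2(\pi/p)). -/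
/-- The modified Chebyshev polynomials: `P 0 = 1`, `P 1 = X`,
`P (j+2) = X * P (j+1) - P j`. -/
noncomputable def modCheb : ℕ → Polynomial ℤ
  | 0 => 1
  | 1 => Polynomial.X
  | j + 2 => Polynomial.X * modCheb (j + 1) - modCheb j

/-- The coefficients `n_j`: `(p-1-j)/2` for even `j`, `(j+1)/2` for odd `j`. -/
def nCoeff (p j : ℕ) : ℕ := if j % 2 = 0 then (p - 1 - j) / 2 else (j + 1) / 2

/-! With `θ = π / p` the argument is `2 cos θ`, at which `P_j` takes the value
`sin ((j + 1) θ) / sin θ`. Since `sin (k θ) = sin ((p - k) θ)`, the terms of even index `j` can be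
moved to the even frequency `p - 1 - j`, where their weight `n_j` is half that frequency; so
`R_p (2 cos θ) sin θ = ∑_{i=1}^{m} i sin (2 i θ)` with `p = 2m + 1`, and the classical closed form of
that sum, together with `sin (2 m θ) = - sin (2 (m + 1) θ) = sin θ`, evaluates it to
`p / (4 sin θ)`. -/

open Real Finset Polynomial

theorem modCheb_eq_S : ∀ j : ℕ, modCheb j = Chebyshev.S ℤ j
  | 0 => by simp [modCheb]
  | 1 => by simp [modCheb]
  | j + 2 => by
    rw [modCheb, modCheb_eq_S (j + 1), modCheb_eq_S j]
    push_cast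
    exact (Chebyshev.S_add_two ℤ j).symm

theorem aeval_modCheb_two_mul_cos_mul_sin (θ : ℝ) (j : ℕ) :
    aeval (2 * cos θ) (modCheb j) * sin θ = sin ((j + 1) * θ) := by
  simp [modCheb_eq_S, Chebyshev.aeval_S]

theorem sum_nCoeff_smul_eq_sum_even {M : Type*} [AddCommMonoid M] (m : ℕ) (g : ℕ → M)
    (hg : ∀ k l, k + l = 2 * m + 1 → g k = g l) :
    ∑ j ∈ range m, nCoeff (2 * m + 1) j • g (j + 1) = ∑ i ∈ range m, (i + 1) • g (2 * (i + 1)) := by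
  -- `j ↦ i` with `2 (i + 1)` equal to `j + 1` for odd `j` and to `2 m - j` for even `j`
  refine sum_nbij' (fun j ↦ if j % 2 = 0 then m - 1 - j / 2 else j / 2)
    (fun i ↦ if 2 * (i + 1) ≤ m then 2 * i + 1 else 2 * m - 2 * i - 2) ?_ ?_ ?_ ?_ ?_ <;>
    intro j hj <;> simp only [mem_range] at hj ⊢
  any_goals split_ifs <;> omega
  unfold nCoeff
  split_ifs
  · rw [hg (j + 1) (2 * (m - 1 - j / 2 + 1)) (by omega)]
    congr 1; omega
  · congr 2 <;> omega

theorem sum_mul_sin_mul_two_sub_two_cos (α : ℝ) (n : ℕ) :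
    (∑ k ∈ range n, ((k : ℝ) + 1) * sin ((k + 1) * α)) * (2 - 2 * cos α) =
      (n + 1) * sin (n * α) - n * sin ((n + 1) * α) := by
  induction n with
  | zero => simp
  | succ n ih =>
    have h := sin_add ((n + 1) * α) α
    have h' := sin_sub ((n + 1) * α) α
    rw [sum_range_succ, add_mul, ih]
    push_cast
    ring_nf at h h' ⊢
    linear_combination (n + 1 : ℝ) * (h + h')

theorem sum_nCoeff_mul_sin_mul_four_sin_sq {m : ℕ} {θ : ℝ} (hθ : (2 * m + 1) * θ = π) :
    (∑ j ∈ range m, (nCoeff (2 * m + 1) j : ℝ) * sin ((j + 1) * θ)) * (4 * sin θ ^ 2) =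
      (2 * m + 1) * sin θ := by
  have hsymm : ∀ k l, k + l = 2 * m + 1 → sin (k * θ) = sin (l * θ) := by
    intro k l hkl
    have hkl' : (k : ℝ) + l = 2 * m + 1 := mod_cast hkl
    rw [show (l : ℝ) * θ = π - k * θ by rw [← hθ, ← hkl']; ring, sin_pi_sub]
  have hreindex := sum_nCoeff_smul_eq_sum_even m (fun k ↦ sin (k * θ)) hsymm
  simp only [nsmul_eq_mul] at hreindex
  push_cast at hreindex
  have hdouble (i : ℕ) : sin (2 * ((i : ℝ) + 1) * θ) = sin ((i + 1) * (2 * θ)) := by ring_nf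
  simp only [hdouble] at hreindex
  have hclosed := sum_mul_sin_mul_two_sub_two_cos (2 * θ) m
  rw [show (m : ℝ) * (2 * θ) = π - θ by linarith, show ((m : ℝ) + 1) * (2 * θ) = θ + π by linarith,
    sin_pi_sub, sin_add_pi, cos_two_mul, cos_sq'] at hclosed
  rw [hreindex]
  linear_combination hclosed

theorem Rp_eval_norm_general (p : ℕ) (hodd : Odd p) :
    ∑ j ∈ Finset.range ((p - 3) / 2 + 1),
        (nCoeff p j : ℝ) *
          Polynomial.aeval (4 * Real.cos (Real.pi / (2 * p)) ^ 2 - 2) (modCheb j) =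
      (p : ℝ) / (4 * Real.sin (Real.pi / p) ^ 2) := by
  obtain ⟨m, rfl⟩ := hodd
  rcases Nat.eq_zero_or_pos m with rfl | hm
  · -- `p = 1`: the right side is `1 / 0 = 0` since `sin π = 0`, the left side is `n_0 = 0`
    simp [nCoeff]
  rw [show (2 * m + 1 - 3) / 2 + 1 = m by omega]
  push_cast
  set θ := π / (2 * m + 1) with hθ_def
  have hθ : (2 * m + 1) * θ = π := by rw [hθ_def]; field_simp
  have hsin : 0 < sin θ := by
    have : (1 : ℝ) < 2 * m + 1 := by have : (0 : ℝ) < m := mod_cast hm; linarith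
    exact sin_pos_of_pos_of_lt_pi (by positivity) (div_lt_self pi_pos this)
  have harg : 4 * cos (π / (2 * (2 * m + 1))) ^ 2 - 2 = 2 * cos θ := by
    rw [hθ_def, show π / (2 * m + 1) = 2 * (π / (2 * (2 * m + 1))) by field_simp, cos_two_mul]
    ring
  have hterms : (∑ j ∈ range m, (nCoeff (2 * m + 1) j : ℝ) * aeval (2 * cos θ) (modCheb j)) *
      sin θ = ∑ j ∈ range m, (nCoeff (2 * m + 1) j : ℝ) * sin ((j + 1) * θ) := by
    rw [sum_mul]
    exact sum_congr rfl fun j _ ↦ by rw [mul_assoc, aeval_modCheb_two_mul_cos_mul_sin]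
  have hcore := sum_nCoeff_mul_sin_mul_four_sin_sq hθ
  rw [← hterms] at hcore
  rw [harg, eq_div_iff (by positivity)]
  apply mul_right_cancel₀ hsin.ne'
  linear_combination hcore

/-- For an odd prime `p`:
`∑_{j=0}^{(p-3)/2} n_j P_j(4 cos²(π/(2p)) - 2) = p / (4 sin²(π/p))`,
i.e. `R_p(‖f_p‖) = ‖F_p‖`. -/
theorem Rp_eval_norm (p : ℕ) (hp : p.Prime) (hodd : Odd p) :
    ∑ j ∈ Finset.range ((p - 3) / 2 + 1),
        (nCoeff p j : ℝ) *
          Polynomial.aeval (4 * Real.cos (Real.pi / (2 * p)) ^ 2 - 2) (modCheb j) =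
      (p : ℝ) / (4 * Real.sin (Real.pi / p) ^ 2) :=
  Rp_eval_norm_general p hodd
end

section
/- Let R be a commutative ring, M an R-module, N and m natural numbers, and (E_i)_{i < N} a family of pairwise commuting R-linear endomorphisms of M with E_i \circ E_i = 0 for every i. Then (\sum_{i < N} E_i)^m = m! \cdot \sum_{S \subseteq \{0, \dots, N-1\},\ |S| = m} \prod_{i \in S} E_i, where each product over S is independent of the order of its factors since the E_i pairwise commute. In particular, if m = p is a prime then the image of (\sum_{i<N} E_i)^p is contained in p \cdot M. -/
/-! Expand `(∑ i, E i) ^ m` by the multinomial theorem for commuting elements. Since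
`E i * E i = 0`, only the exponent vectors `k` with all `k i ≤ 1` survive; these are the
indicator functions of the `m`-element subsets `S`, and for them the multinomial coefficient
is `m! / ∏ (k i)! = m!`. For prime `m` the factor `m! = m * (m - 1)!` puts the image in `m • M`. -/

open Finset Nat

namespace Finset

variable {ι R : Type*}

theorem noncommProd_eq_zero_of_mem [MonoidWithZero R] (s : Finset ι) (f : ι → R) (comm)
    {i : ι} (hi : i ∈ s) (hf : f i = 0) : s.noncommProd f comm = 0 := by
  classical
  rw [← noncommProd_erase_mul s hi f comm, hf, mul_zero]

section DecidableEq

variable [DecidableEq ι]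

theorem noncommProd_pow_ite_mem_eq [Monoid R] {s T : Finset ι} (hT : T ⊆ s) (f : ι → R)
    (comm) (comm') :
    s.noncommProd (fun i => f i ^ if i ∈ T then 1 else 0) comm = T.noncommProd f comm' := by
  have hs : s = T ∪ (s \ T) := (union_sdiff_of_subset hT).symm
  refine (noncommProd_congr hs (fun _ _ => rfl) comm).trans
    ((noncommProd_union_of_disjoint disjoint_sdiff _ _).trans ?_)
  rw [noncommProd_eq_pow_card (s \ T) _ _ 1 (fun i hi => by simp [(mem_sdiff.1 hi).2]),
    one_pow, mul_one]
  exact noncommProd_congr rfl (fun i hi => by simp [hi]) _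

theorem multinomial_ite_mem {s T : Finset ι} (hT : T ⊆ s) :
    multinomial s (fun i => if i ∈ T then 1 else 0) = (#T)! := by
  have hspec := multinomial_spec s fun i => if i ∈ T then 1 else 0
  rwa [prod_eq_one (fun i _ => by split_ifs <;> rfl), one_mul, sum_boole,
    filter_mem_eq_inter, inter_eq_right.2 hT] at hspec

theorem sum_piAntidiag_filter_le_one {M : Type*} [AddCommMonoid M] (s : Finset ι) (m : ℕ)
    (g : (ι → ℕ) → M) :
    ∑ k ∈ piAntidiag s m with ∀ i ∈ s, k i ≤ 1, g k =
      ∑ T ∈ powersetCard m s, g (fun i => if i ∈ T then 1 else 0) := by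
  symm
  refine sum_nbij' (fun T i => if i ∈ T then 1 else 0) (fun k => {i ∈ s | k i = 1})
    ?_ ?_ ?_ ?_ (fun _ _ => rfl)
  · intro T hT
    rw [mem_powersetCard] at hT
    simp only [mem_filter, mem_piAntidiag]
    refine ⟨⟨?_, fun i hi => hT.1 (by simpa using hi)⟩, fun i _ => by split_ifs <;> simp⟩
    rw [sum_boole, filter_mem_eq_inter, inter_eq_right.2 hT.1, hT.2, Nat.cast_id]
  · intro k hk
    simp only [mem_filter, mem_piAntidiag] at hk
    rw [mem_powersetCard]
    refine ⟨filter_subset _ _, ?_⟩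
    rw [card_filter, ← hk.1.1]
    exact sum_congr rfl fun i hi => by have := hk.2 i hi; split_ifs <;> omega
  · intro T hT
    rw [mem_powersetCard] at hT
    ext i
    simpa using fun hi => hT.1 hi
  · intro k hk
    simp only [mem_filter, mem_piAntidiag] at hk
    funext i
    by_cases hi : i ∈ s
    · have := hk.2 i hi
      simp only [mem_filter, hi, true_and]
      split_ifs <;> omega
    · simp [hi, not_imp_comm.1 (hk.1.2 i) hi]

end DecidableEq

theorem sum_pow_of_commute_of_mul_self_eq_zero [Semiring R] (s : Finset ι) (f : ι → R)
    (hcomm : ∀ i j, Commute (f i) (f j)) (hsq : ∀ i ∈ s, f i * f i = 0) (m : ℕ) :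
    (∑ i ∈ s, f i) ^ m =
      m ! • ∑ T ∈ powersetCard m s, T.noncommProd f (fun i _ j _ _ => hcomm i j) := by
  classical
  rw [sum_pow_eq_sum_piAntidiag_of_commute s f (fun i _ j _ _ => hcomm i j) m,
    ← sum_filter_of_ne (p := fun k => ∀ i ∈ s, k i ≤ 1) ?vanish, smul_sum,
    sum_piAntidiag_filter_le_one]
  · refine sum_congr rfl fun T hT => ?_
    rw [mem_powersetCard] at hT
    rw [multinomial_ite_mem hT.1, hT.2, nsmul_eq_mul,
      noncommProd_pow_ite_mem_eq hT.1 f _ fun i _ j _ _ => hcomm i j]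
  · intro k _ hk i hi
    by_contra! h
    have hfk : f i ^ k i = 0 := pow_eq_zero_of_le h (by rw [sq]; exact hsq i hi)
    exact hk (by rw [noncommProd_eq_zero_of_mem s _ _ hi hfk, mul_zero])

end Finset

/-- Let `R` be a commutative ring, `M` an `R`-module, and `(E i)_{i < N}` pairwise
commuting `R`-linear endomorphisms of `M` with `E i ∘ E i = 0`. Then
`(∑ i, E i)^m = m! • ∑_{S ⊆ {0,…,N-1}, |S| = m} ∏_{i ∈ S} E i` (the products taken as
`noncommProd`, well-defined since the `E i` commute). In particular, if `m` is a
prime then the image of `(∑ i, E i)^m` lies in `m • M`. -/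
theorem sum_nilpotent_pow_eq_factorial_smul_sum
    (R : Type*) [CommRing R] (M : Type*) [AddCommGroup M] [Module R M]
    (N m : ℕ) (E : Fin N → Module.End R M)
    (hcomm : ∀ i j, Commute (E i) (E j)) (hsq : ∀ i, E i * E i = 0) :
    ((∑ i, E i) ^ m =
      m.factorial •
        ∑ S ∈ Finset.powersetCard m (Finset.univ : Finset (Fin N)),
          S.noncommProd E (fun i _ j _ _ => hcomm i j)) ∧
    (m.Prime → ∀ v : M, ∃ w : M, ((∑ i, E i) ^ m) v = m • w) := by
  have hpow := sum_pow_of_commute_of_mul_self_eq_zero univ E hcomm (fun i _ => hsq i) m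
  refine ⟨hpow, fun hm v => ⟨((m - 1)! • ∑ S ∈ powersetCard m univ,
    S.noncommProd E (fun i _ j _ _ => hcomm i j)) v, ?_⟩⟩
  rw [hpow, ← mul_factorial_pred hm.ne_zero, mul_smul, LinearMap.smul_apply]
end

section
/- For every natural number b with 2b \le n, the \mathbb{Q}-subspace \{v \in V : F v = 0 \text{ and } H v = (2b - n) \cdot v\} of V has dimension \binom{n}{b} - \binom{n}{b-1} (with the convention \binom{n}{-1} = 0). -/
/-!
Expanding in the pure tensors `e_{s 0} ⊗ ⋯ ⊗ e_{s (n-1)}` (index `0` for `e₋`, `1` for `e₊`)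
identifies `V` with the functions on configurations `s : Fin n → Fin 2`. There `H` multiplies by
`2 · weight s - n`, where `weight s` counts the factors `e₊`, so its `(2b - n)`-eigenspace consists
of the functions supported on weight `b` and has dimension `C(n, b)`; `F` maps it to weight `b - 1`.
The raising operator `E` is the transpose of `F` for the dot product, and
`FE - EF = n - 2 · weight`. So if `v` has weight `b - 1` and `FEv = 0`, then
`0 ≥ -|Fv|² = ⟨v, (FE - EF) v⟩ = (n - 2b + 2)|v|²`, forcing `v = 0` when `2b ≤ n`.
Hence `F` maps weight `b` onto weight `b - 1`, and rank-nullity gives `C(n, b) - C(n, b - 1)`.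
-/

open scoped TensorProduct

/-- The `n`-fold tensor power `V = (ℚ²)^{⊗ n}` over `ℚ`. -/
abbrev Vtens (n : ℕ) := ⨂[ℚ] _ : Fin n, (Fin 2 → ℚ)

/-- `e : ℚ² → ℚ²` with `e(e₋) = e₊`, `e(e₊) = 0`, where `e₋ = (1,0)`, `e₊ = (0,1)`. -/
noncomputable def eMapQ : (Fin 2 → ℚ) →ₗ[ℚ] (Fin 2 → ℚ) := Matrix.toLin' !![0, 0; 1, 0]

/-- `f : ℚ² → ℚ²` with `f(e₊) = e₋`, `f(e₋) = 0`. -/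
noncomputable def fMapQ : (Fin 2 → ℚ) →ₗ[ℚ] (Fin 2 → ℚ) := Matrix.toLin' !![0, 1; 0, 0]

/-- `h : ℚ² → ℚ²` with `h(e₊) = e₊`, `h(e₋) = -e₋`. -/
noncomputable def hMapQ : (Fin 2 → ℚ) →ₗ[ℚ] (Fin 2 → ℚ) := Matrix.toLin' !![-1, 0; 0, 1]

/-- `F = ∑ᵢ id ⊗ ⋯ ⊗ f ⊗ ⋯ ⊗ id` acting on `(ℚ²)^{⊗ n}`. -/
noncomputable def FopQ (n : ℕ) : Module.End ℚ (Vtens n) :=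
  ∑ i : Fin n, PiTensorProduct.map (Function.update (fun _ => LinearMap.id) i fMapQ)

/-- `H = ∑ᵢ id ⊗ ⋯ ⊗ h ⊗ ⋯ ⊗ id` acting on `(ℚ²)^{⊗ n}`. -/
noncomputable def HopQ (n : ℕ) : Module.End ℚ (Vtens n) :=
  ∑ i : Fin n, PiTensorProduct.map (Function.update (fun _ => LinearMap.id) i hMapQ)

namespace TensorPowerSL2

open Function Finset Module

section SiteOperators

variable {R : Type*} [CommRing R] {ι : Type*} [DecidableEq ι]

def lowerAt (i : ι) : Module.End R ((ι → Fin 2) → R) :=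
  LinearMap.pi fun s => if s i = 0 then LinearMap.proj (update s i 1) else 0

def raiseAt (i : ι) : Module.End R ((ι → Fin 2) → R) :=
  LinearMap.pi fun s => if s i = 1 then LinearMap.proj (update s i 0) else 0

lemma lowerAt_apply (i : ι) (g : (ι → Fin 2) → R) (s : ι → Fin 2) :
    lowerAt i g s = if s i = 0 then g (update s i 1) else 0 := by
  by_cases h : s i = 0 <;> simp [lowerAt, h]

lemma raiseAt_apply (i : ι) (g : (ι → Fin 2) → R) (s : ι → Fin 2) :
    raiseAt i g s = if s i = 1 then g (update s i 0) else 0 := by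
  by_cases h : s i = 1 <;> simp [raiseAt, h]

lemma lowerAt_mul_raiseAt_of_ne {i j : ι} (hij : i ≠ j) :
    lowerAt i * raiseAt j = (raiseAt j * lowerAt i : Module.End R ((ι → Fin 2) → R)) := by
  refine LinearMap.ext fun g => funext fun s => ?_
  simp only [Module.End.mul_apply, lowerAt_apply, raiseAt_apply, update_of_ne hij,
    update_of_ne hij.symm, update_comm hij]
  split_ifs <;> rfl

lemma lowerAt_mul_raiseAt_sub_apply (i : ι) (g : (ι → Fin 2) → R) (s : ι → Fin 2) :
    (lowerAt i * raiseAt i - raiseAt i * lowerAt i : Module.End R ((ι → Fin 2) → R)) g s =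
      -(if s i = 1 then 1 else -1) * g s := by
  rcases (by omega : s i = 0 ∨ s i = 1) with h | h <;>
    simp [lowerAt_apply, raiseAt_apply, h, (update_eq_self_iff (f := s)).2 h.symm]

variable [Fintype ι]

lemma dotProduct_raiseAt (i : ι) (g h : (ι → Fin 2) → R) :
    g ⬝ᵥ raiseAt i h = lowerAt i g ⬝ᵥ h := by
  have flip : Involutive fun s : ι → Fin 2 => update s i (s i).rev := fun s => by simp
  refine Fintype.sum_bijective _ flip.bijective _ _ fun s => ?_
  rcases (by omega : s i = 0 ∨ s i = 1) with hs | hs <;>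
    simp [lowerAt_apply, raiseAt_apply, hs, (update_eq_self_iff (f := s)).2 hs.symm]

end SiteOperators

section Lowering

variable {R : Type*} [CommRing R] {ι : Type*} [Fintype ι]

def weight (s : ι → Fin 2) : ℕ := #{i | s i = 1}

lemma sum_ite_one_neg_one (s : ι → Fin 2) :
    ∑ i, (if s i = 1 then (1 : R) else -1) = 2 * weight s - Fintype.card ι := by
  rw [sum_ite, sum_const, sum_const, weight, ← card_univ,
    ← card_filter_add_card_filter_not (s := (univ : Finset ι)) (fun i => s i = 1)]
  push_cast
  simp only [nsmul_eq_mul, mul_one, mul_neg]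
  ring

variable [DecidableEq ι]

lemma weight_update_one {s : ι → Fin 2} {i : ι} (h : s i = 0) :
    weight (update s i 1) = weight s + 1 := by
  have : (univ.filter fun j => update s i 1 j = 1) = insert i (univ.filter fun j => s j = 1) := by
    ext j
    by_cases hj : j = i <;> simp [hj]
  rw [weight, weight, this, card_insert_of_notMem (by simp [h])]

def lower : Module.End R ((ι → Fin 2) → R) := ∑ i, lowerAt i

def raise : Module.End R ((ι → Fin 2) → R) := ∑ i, raiseAt i

lemma lower_apply (g : (ι → Fin 2) → R) (s : ι → Fin 2) :
    lower g s = ∑ i, if s i = 0 then g (update s i 1) else 0 := by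
  simp [lower, lowerAt_apply]

lemma raise_apply (g : (ι → Fin 2) → R) (s : ι → Fin 2) :
    raise g s = ∑ i, if s i = 1 then g (update s i 0) else 0 := by
  simp [raise, raiseAt_apply]

lemma dotProduct_raise (g h : (ι → Fin 2) → R) : g ⬝ᵥ raise h = lower g ⬝ᵥ h := by
  simp [raise, lower, LinearMap.sum_apply, dotProduct_sum, sum_dotProduct, dotProduct_raiseAt]

lemma lower_mul_raise_sub_apply (g : (ι → Fin 2) → R) (s : ι → Fin 2) :
    (lower * raise - raise * lower : Module.End R ((ι → Fin 2) → R)) g s =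
      (Fintype.card ι - 2 * weight s) * g s := by
  have : (lower * raise - raise * lower : Module.End R ((ι → Fin 2) → R)) =
      ∑ i, (lowerAt i * raiseAt i - raiseAt i * lowerAt i) := by
    rw [lower, raise, sum_mul_sum, sum_mul_sum, sum_comm (f := fun i j => raiseAt i * lowerAt j),
      ← sum_sub_distrib]
    refine sum_congr rfl fun i _ => ?_
    rw [← sum_sub_distrib]
    exact sum_eq_single i (fun j _ hji => by rw [lowerAt_mul_raiseAt_of_ne hji.symm, sub_self])
      (by simp)
  simp only [this, LinearMap.sum_apply, Finset.sum_apply, lowerAt_mul_raiseAt_sub_apply,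
    ← sum_mul, sum_neg_distrib, sum_ite_one_neg_one]
  ring

end Lowering

section WeightSpaces

variable {R : Type*} [CommRing R] {ι : Type*} [Fintype ι]

variable (R ι) in
def weightSpace (b : ℕ) : Submodule R ((ι → Fin 2) → R) where
  carrier := {g | ∀ s, weight s ≠ b → g s = 0}
  add_mem' hg hh s hs := by simp [hg s hs, hh s hs]
  zero_mem' _ _ := rfl
  smul_mem' c g hg s hs := by simp [hg s hs]

lemma mem_weightSpace {b : ℕ} {g : (ι → Fin 2) → R} :
    g ∈ weightSpace R ι b ↔ ∀ s, weight s ≠ b → g s = 0 := Iff.rfl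

variable (R ι) in
def weightSpaceEquiv (b : ℕ) :
    weightSpace R ι b ≃ₗ[R] ({s : ι → Fin 2 // weight s = b} → R) where
  toFun g t := g.1 t.1
  invFun h := ⟨fun s => if hs : weight s = b then h ⟨s, hs⟩ else 0, fun s hs => dif_neg hs⟩
  map_add' _ _ := rfl
  map_smul' _ _ := rfl
  left_inv g := Subtype.ext <| funext fun s => by
    by_cases hs : weight s = b
    · simp [hs]
    · simp [hs, g.2 s hs]
  right_inv h := funext fun t => dif_pos t.2

variable [DecidableEq ι]

lemma lower_apply_eq_zero {b : ℕ} {g : (ι → Fin 2) → R} (hg : g ∈ weightSpace R ι b)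
    {s : ι → Fin 2} (hs : weight s + 1 ≠ b) : lower g s = 0 := by
  rw [lower_apply]
  refine sum_eq_zero fun i _ => ?_
  split_ifs with h
  · exact hg _ (by rwa [weight_update_one h])
  · rfl

lemma raise_mem_weightSpace {b : ℕ} {g : (ι → Fin 2) → R} (hg : g ∈ weightSpace R ι b) :
    raise g ∈ weightSpace R ι (b + 1) := by
  intro s hs
  rw [raise_apply]
  refine sum_eq_zero fun i _ => ?_
  split_ifs with h
  · refine hg _ fun hb => hs ?_
    have : update (update s i 0) i 1 = s := by simp [← h]
    rw [← hb, ← weight_update_one (update_self ..), this]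
  · rfl

lemma map_lower_weightSpace_zero : (weightSpace R ι 0).map lower = ⊥ := by
  refine Submodule.eq_bot_iff _ |>.2 ?_
  rintro _ ⟨g, hg, rfl⟩
  exact funext fun s => lower_apply_eq_zero hg (Nat.succ_ne_zero _)

lemma lower_mem_weightSpace {b : ℕ} {g : (ι → Fin 2) → R} (hg : g ∈ weightSpace R ι (b + 1)) :
    lower g ∈ weightSpace R ι b :=
  fun _ hs => lower_apply_eq_zero hg (by omega)

lemma lower_raise_sub_raise_lower_of_mem {b : ℕ} {g : (ι → Fin 2) → R}
    (hg : g ∈ weightSpace R ι b) :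
    lower (raise g) - raise (lower g) = ((Fintype.card ι : R) - 2 * b) • g := by
  funext s
  have := lower_mul_raise_sub_apply g s
  rw [LinearMap.sub_apply, Module.End.mul_apply, Module.End.mul_apply] at this
  rw [Pi.smul_apply, smul_eq_mul, this]
  by_cases hs : weight s = b
  · rw [hs]
  · rw [hg s hs, mul_zero, mul_zero]

end WeightSpaces

section Dimension

variable {K : Type*} [Field K] {ι : Type*} [Fintype ι] [DecidableEq ι]

def configEquivFinset : (ι → Fin 2) ≃ Finset ι where
  toFun s := {i | s i = 1}
  invFun A i := if i ∈ A then 1 else 0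
  left_inv s := funext fun i => by
    rcases (by omega : s i = 0 ∨ s i = 1) with h | h <;> simp [h]
  right_inv A := by ext; simp

lemma finrank_weightSpace (b : ℕ) :
    finrank K (weightSpace K ι b) = (Fintype.card ι).choose b := by
  rw [(weightSpaceEquiv K ι b).finrank_eq, finrank_fintype_fun_eq_card, ← Fintype.card_finset_len]
  exact Fintype.card_congr (configEquivFinset.subtypeEquiv fun s => Iff.rfl)

lemma finrank_ker_inf_add_finrank_map {V W : Type*} [AddCommGroup V] [Module K V]
    [AddCommGroup W] [Module K W] (f : V →ₗ[K] W) (p : Submodule K V) [FiniteDimensional K p] :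
    finrank K (LinearMap.ker f ⊓ p : Submodule K V) + finrank K (p.map f) = finrank K p := by
  have := (f.domRestrict p).finrank_range_add_finrank_ker
  rw [LinearMap.range_domRestrict, LinearMap.ker_domRestrict] at this
  rw [← this, add_comm]
  congr 1
  have : (LinearMap.ker f).comap p.subtype = (LinearMap.ker f ⊓ p).comap p.subtype := by
    rw [Submodule.comap_inf, Submodule.comap_subtype_self, inf_top_eq]
  rw [this]
  exact (Submodule.comapSubtypeEquivOfLe inf_le_right).finrank_eq.symm

variable [LinearOrder K] [IsStrictOrderedRing K]

lemma eq_zero_of_lower_raise_eq_zero {b : ℕ} (hb : 2 * b < Fintype.card ι)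
    {g : (ι → Fin 2) → K} (hg : g ∈ weightSpace K ι b) (h : lower (raise g) = 0) : g = 0 := by
  have key := congrArg (g ⬝ᵥ ·) (lower_raise_sub_raise_lower_of_mem hg)
  simp only [h, zero_sub, dotProduct_neg, dotProduct_raise, dotProduct_smul, smul_eq_mul] at key
  have hc : (0 : K) < Fintype.card ι - 2 * b := by
    rw [sub_pos]; exact_mod_cast hb
  have hlower : 0 ≤ lower g ⬝ᵥ lower g := Fintype.sum_nonneg fun _ => mul_self_nonneg _
  have hself : 0 ≤ g ⬝ᵥ g := Fintype.sum_nonneg fun _ => mul_self_nonneg _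
  exact dotProduct_self_eq_zero.1 (by nlinarith)

lemma map_lower_weightSpace_succ {b : ℕ} (hb : 2 * (b + 1) ≤ Fintype.card ι) :
    (weightSpace K ι (b + 1)).map lower = weightSpace K ι b := by
  refine le_antisymm (Submodule.map_le_iff_le_comap.2 fun g => lower_mem_weightSpace) fun w hw => ?_
  let T : Module.End K (weightSpace K ι b) :=
    (lower * raise).restrict fun g hg => lower_mem_weightSpace (raise_mem_weightSpace hg)
  have hT : Injective T := by
    refine (injective_iff_map_eq_zero T).2 fun g hg => Subtype.ext ?_
    exact eq_zero_of_lower_raise_eq_zero (by omega) g.2 (congrArg Subtype.val hg)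
  obtain ⟨u, hu⟩ := LinearMap.injective_iff_surjective.1 hT ⟨w, hw⟩
  exact ⟨raise u, raise_mem_weightSpace u.2, congrArg Subtype.val hu⟩

end Dimension

section TensorPower

variable {R : Type*} [CommRing R] {ι : Type*} [Fintype ι] [DecidableEq ι]
  {κ : Type*} [Fintype κ] [DecidableEq κ]

variable (R ι κ) in
noncomputable def stdBasis : Basis (ι → κ) R (⨂[R] _ : ι, κ → R) :=
  Basis.piTensorProduct fun _ => Pi.basisFun R κ

lemma stdBasis_repr_map_update_toLin' (M : Matrix κ κ R) (i : ι) (v : ⨂[R] _ : ι, κ → R)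
    (s : ι → κ) :
    (stdBasis R ι κ).repr
        (PiTensorProduct.map (update (fun _ => LinearMap.id) i (Matrix.toLin' M)) v) s =
      ∑ x, M (s i) x * (stdBasis R ι κ).repr v (update s i x) := by
  induction v using PiTensorProduct.induction_on with
  | smul_tprod r v =>
    have hrest : ∀ x, ∏ j ∈ {i}ᶜ, v j (update s i x j) =
        ∏ j ∈ {i}ᶜ, (update (fun _ => LinearMap.id) i (Matrix.toLin' M) j (v j)) (s j) :=
      fun x => prod_congr rfl fun j hj => by
        have hji : j ≠ i := by simpa using hj
        rw [update_of_ne hji, update_of_ne hji]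
        rfl
    simp only [map_smul, PiTensorProduct.map_tprod, Finsupp.smul_apply, stdBasis,
      Basis.piTensorProduct_repr_tprod_apply, Pi.basisFun_repr, smul_eq_mul]
    rw [Fintype.prod_eq_mul_prod_compl i]
    simp only [Fintype.prod_eq_mul_prod_compl i (fun j => v j (update s i _ j)), update_self, hrest,
      Matrix.toLin'_apply, Matrix.mulVec, dotProduct, sum_mul]
    rw [mul_sum]
    exact sum_congr rfl fun x _ => by ring
  | add v w hv hw => simp only [map_add, Finsupp.add_apply, hv, hw, mul_add, sum_add_distrib]

end TensorPower

section SpinChain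

noncomputable def coords (n : ℕ) : Vtens n ≃ₗ[ℚ] ((Fin n → Fin 2) → ℚ) :=
  (stdBasis ℚ (Fin n) (Fin 2)).equivFun

lemma coords_FopQ (n : ℕ) (v : Vtens n) : coords n (FopQ n v) = lower (coords n v) := by
  funext s
  simp only [coords, FopQ, fMapQ, LinearMap.sum_apply, map_sum, Finset.sum_apply,
    Basis.equivFun_apply, stdBasis_repr_map_update_toLin', lower_apply]
  refine sum_congr rfl fun i _ => ?_
  rcases (by omega : s i = 0 ∨ s i = 1) with h | h <;> simp [h, Fin.sum_univ_two]

lemma coords_HopQ (n : ℕ) (v : Vtens n) (s : Fin n → Fin 2) :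
    coords n (HopQ n v) s = (2 * weight s - n) * coords n v s := by
  have hsign := sum_ite_one_neg_one (R := ℚ) s
  rw [Fintype.card_fin] at hsign
  simp only [coords, HopQ, hMapQ, LinearMap.sum_apply, map_sum, Finset.sum_apply,
    Basis.equivFun_apply, stdBasis_repr_map_update_toLin']
  rw [← hsign, sum_mul]
  refine sum_congr rfl fun i _ => ?_
  rcases (by omega : s i = 0 ∨ s i = 1) with h | h <;>
    simp [h, Fin.sum_univ_two, (update_eq_self_iff (f := s)).2 h.symm]

lemma ker_FopQ (n : ℕ) :
    LinearMap.ker (FopQ n) = (LinearMap.ker lower).comap (coords n).toLinearMap := by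
  ext v
  rw [Submodule.mem_comap, LinearMap.mem_ker, LinearMap.mem_ker, LinearEquiv.coe_coe,
    ← coords_FopQ, LinearEquiv.map_eq_zero_iff]

lemma ker_HopQ_sub (n b : ℕ) :
    LinearMap.ker (HopQ n - (2 * (b : ℤ) - (n : ℤ)) • (1 : Module.End ℚ (Vtens n))) =
      (weightSpace ℚ (Fin n) b).comap (coords n).toLinearMap := by
  ext v
  rw [Submodule.mem_comap, LinearMap.mem_ker, mem_weightSpace, LinearEquiv.coe_coe,
    ← LinearEquiv.map_eq_zero_iff (coords n), funext_iff]
  refine forall_congr' fun s => ?_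
  have hcoeff : 2 * (weight s : ℚ) - n - ((2 * (b : ℤ) - n : ℤ) : ℚ) = 0 ↔ weight s = b := by
    push_cast
    rw [← Nat.cast_inj (R := ℚ)]
    constructor <;> intro h <;> linarith
  rw [LinearMap.sub_apply, LinearMap.smul_apply, Module.End.one_apply, map_sub, map_zsmul,
    Pi.sub_apply, Pi.smul_apply, coords_HopQ, Pi.zero_apply, zsmul_eq_mul, ← sub_mul,
    mul_eq_zero, hcoeff, or_iff_not_imp_left]

end SpinChain

end TensorPowerSL2

open TensorPowerSL2 in
theorem dim_lowest_weight_space_general (n : ℕ) (b : ℕ) (hb : 2 * b ≤ n) :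
    (Module.finrank ℚ
        ↥(LinearMap.ker (FopQ n) ⊓
          LinearMap.ker (HopQ n - (2 * (b : ℤ) - (n : ℤ)) • (1 : Module.End ℚ (Vtens n)))) : ℤ) =
      (n.choose b : ℤ) - (if b = 0 then 0 else (n.choose (b - 1) : ℤ)) := by
  rw [ker_FopQ, ker_HopQ_sub, ← Submodule.comap_inf, Submodule.comap_equiv_eq_map_symm,
    LinearEquiv.finrank_map_eq]
  have hrank := finrank_ker_inf_add_finrank_map lower (weightSpace ℚ (Fin n) b)
  rw [finrank_weightSpace, Fintype.card_fin] at hrank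
  cases b with
  | zero =>
    rw [map_lower_weightSpace_zero, finrank_bot] at hrank
    simp only [if_true, sub_zero]
    omega
  | succ b =>
    rw [map_lower_weightSpace_succ (by simpa using hb), finrank_weightSpace,
      Fintype.card_fin] at hrank
    simp only [Nat.succ_ne_zero, if_false, Nat.add_sub_cancel]
    omega

/-- For `2b ≤ n`, the subspace `{v ∈ V : F v = 0, H v = (2b - n) v}` of `V = (ℚ²)^{⊗ n}`
has dimension `binom(n,b) - binom(n,b-1)` (with `binom(n,-1) = 0`). -/
theorem dim_lowest_weight_space (n : ℕ) (hn : 1 ≤ n) (b : ℕ) (hb : 2 * b ≤ n) :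
    (Module.finrank ℚ
        ↥(LinearMap.ker (FopQ n) ⊓
          LinearMap.ker (HopQ n - (2 * (b : ℤ) - (n : ℤ)) • (1 : Module.End ℚ (Vtens n)))) : ℤ) =
      (n.choose b : ℤ) - (if b = 0 then 0 else (n.choose (b - 1) : ℤ)) :=
  dim_lowest_weight_space_general n b hb
end

section
/- Let p be an odd prime and c a positive integer whose digit c_0 = c \bmod p is nonzero and which has some nonzero digit c_j with j \ge 1; set k = \min\{j \ge 1 : c_j \ne 0\} and c' = c - 2c_0 (which is positive). Then: (1) every finite c'-admissible set I with 0 \in I contains the interval \{0, 1, \dots, k-1\}; and (2) the map I \mapsto I \setminus \{0, \dots, k-1\} is a bijection from the collection of finite c'-admissible sets I with 0 \in I onto the collection of finite c-admissible sets J with 0 \notin J, with inverse J \mapsto J \cup \{0, \dots, k-1\}. -/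
/-- `digit p c i` is the `i`-th base-`p` digit of `c`. -/
def digit (p c i : ℕ) : ℕ := c / p ^ i % p

/-- A finite set `I ⊆ ℕ` is `c`-admissible (for the base-`p` digits of `c`) if
(a) for every `i ∈ I` with `i = 0` or `i-1 ∉ I` one has `c_i ≠ 0`, and
(b) for every `i ∉ I` with `i ≥ 1` and `i-1 ∈ I` one has `c_i ≠ p-1`. -/
def IsAdmissible (p c : ℕ) (I : Finset ℕ) : Prop :=
  (∀ i ∈ I, (i = 0 ∨ i - 1 ∉ I) → digit p c i ≠ 0) ∧
  (∀ i : ℕ, i ∉ I → 1 ≤ i → i - 1 ∈ I → digit p c i ≠ p - 1)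

/-- `δ_c(I) = ∑_{i ∈ I} (p-1-c_i) p^i + ∑_{i ∈ I, i=0 ∨ i-1 ∉ I} p^i`. -/
def deltaC (p c : ℕ) (I : Finset ℕ) : ℕ :=
  (∑ i ∈ I, (p - 1 - digit p c i) * p ^ i) +
    ∑ i ∈ I.filter (fun i => i = 0 ∨ i - 1 ∉ I), p ^ i

/-!
Since `c₁ = ⋯ = c_{k-1} = 0`, we have `c = p ^ k * q + c₀` with `q = c / p ^ k`, whose last
digit is `c_k ≠ 0`. Hence `c' = p ^ k * (q - 1) + (p ^ k - c₀)`, so the digits of `c'` are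
`p - c₀` at `0`, `p - 1` at `1, …, k-1`, `c_k - 1` at `k` and `c_i` at every `i > k`. The digits
`p - 1` force a `c'`-admissible set containing `0` to contain `{0, …, k-1}`, the zero digits of
`c` force a `c`-admissible set avoiding `0` to avoid `{0, …, k-1}`, and above `k` the two
admissibility conditions coincide.
-/

section Digits

variable {p : ℕ}

theorem digit_zero (n : ℕ) : digit p n 0 = n % p := by
  simp [digit]

theorem digit_div_pow (n k i : ℕ) : digit p (n / p ^ k) i = digit p n (i + k) := by
  rw [digit, digit, Nat.div_div_eq_div_mul, ← pow_add, add_comm k]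

theorem digit_pow_mul_add (hp : 0 < p) {a k : ℕ} (ha : a < p ^ k) (b i : ℕ) :
    digit p (p ^ k * b + a) i = if i < k then digit p a i else digit p b (i - k) := by
  unfold digit
  split_ifs with hik
  · have hdiv : (p ^ k * b + a) / p ^ i = a / p ^ i + p * (p ^ (k - i - 1) * b) := by
      rw [add_comm, ← mul_assoc, ← pow_succ', show k - i - 1 + 1 = k - i by omega,
        show p ^ k = p ^ i * p ^ (k - i) by rw [← pow_add]; congr 1; omega, mul_assoc,
        Nat.add_mul_div_left _ _ (by positivity)]
    rw [hdiv, Nat.add_mul_mod_self_left]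
  · rw [show p ^ i = p ^ k * p ^ (i - k) by rw [← pow_add]; congr 1; omega,
      ← Nat.div_div_eq_div_mul, Nat.mul_add_div (by positivity), Nat.div_eq_of_lt ha, add_zero]

theorem digit_mul_add (hp : 0 < p) {a : ℕ} (ha : a < p) (b i : ℕ) :
    digit p (p * b + a) i = if i = 0 then a else digit p b (i - 1) := by
  have h := digit_pow_mul_add hp (k := 1) (by rwa [pow_one]) b i
  rw [pow_one] at h
  rcases i with _ | i <;> simp [h, digit_zero, Nat.mod_eq_of_lt ha]

theorem digit_sub_one (hp : 0 < p) {n : ℕ} (hn : digit p n 0 ≠ 0) (i : ℕ) :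
    digit p (n - 1) i = if i = 0 then digit p n 0 - 1 else digit p n i := by
  rw [digit_zero] at hn ⊢
  have hlt := Nat.mod_lt n hp
  have hn' := digit_mul_add hp hlt (n / p) i
  rw [Nat.div_add_mod] at hn'
  have hsub : n - 1 = p * (n / p) + (n % p - 1) := by have := Nat.div_add_mod n p; omega
  rw [hsub, digit_mul_add hp (by omega), hn']
  split_ifs <;> rfl

theorem digit_pow_sub (hp : 1 < p) {a : ℕ} (ha₀ : 0 < a) (ha : a < p) {k i : ℕ} (hi : i < k) :
    digit p (p ^ k - a) i = if i = 0 then p - a else p - 1 := by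
  induction k generalizing a i with
  | zero => omega
  | succ k ih =>
    have hpow : 1 ≤ p ^ k := Nat.one_le_pow _ _ (by omega)
    have hsplit : p ^ (k + 1) - a = p * (p ^ k - 1) + (p - a) := by
      rw [Nat.mul_sub_one, pow_succ']
      have : p ≤ p * p ^ k := Nat.le_mul_of_pos_right p hpow
      omega
    rw [hsplit, digit_mul_add (by omega) (by omega)]
    split_ifs with hi0
    · rfl
    · rw [ih (by omega) hp (by omega)]
      split_ifs <;> rfl

theorem mod_pow_eq_digit_zero {c k : ℕ} (hk : 1 ≤ k)
    (hkmin : ∀ j, 1 ≤ j → j < k → digit p c j = 0) : c % p ^ k = digit p c 0 := by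
  induction k with
  | zero => omega
  | succ k ih =>
    rcases Nat.eq_zero_or_pos k with rfl | hk
    · rw [zero_add, pow_one, digit_zero]
    · rw [Nat.mod_pow_succ, ih hk fun j hj hjk => hkmin j hj (by omega),
        show c / p ^ k % p = 0 from hkmin k hk (by omega), mul_zero, add_zero]

theorem digit_sub_two_mul_digit_zero (hp : 1 < p) {c k : ℕ} (hc0 : digit p c 0 ≠ 0)
    (hk : 1 ≤ k) (hk2 : digit p c k ≠ 0) (hkmin : ∀ j, 1 ≤ j → j < k → digit p c j = 0)
    (i : ℕ) :
    digit p (c - 2 * digit p c 0) i =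
      if i = 0 then p - digit p c 0
      else if i < k then p - 1
      else if i = k then digit p c k - 1
      else digit p c i := by
  set c₀ := digit p c 0 with hc₀
  set q := c / p ^ k with hq
  have hc₀p : c₀ < p := Nat.mod_lt _ (by omega)
  have hc₀pk : c₀ < p ^ k := hc₀p.trans_le (Nat.le_self_pow (by omega) p)
  have hq0 : digit p q 0 ≠ 0 := by rwa [hq, digit_div_pow, zero_add]
  have hq1 : 1 ≤ q := Nat.one_le_iff_ne_zero.2 fun h => hq0 (by simp [h, digit])
  have hc : c = p ^ k * q + c₀ := by
    rw [hq, hc₀, ← mod_pow_eq_digit_zero hk hkmin, Nat.div_add_mod]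
  have hc' : c - 2 * c₀ = p ^ k * (q - 1) + (p ^ k - c₀) := by
    have : p ^ k ≤ p ^ k * q := Nat.le_mul_of_pos_right _ hq1
    rw [Nat.mul_sub_one]
    omega
  rw [hc', digit_pow_mul_add (by omega) (by omega : p ^ k - c₀ < p ^ k)]
  split_ifs with hik hi0 hi0
  · rw [digit_pow_sub hp (by omega) hc₀p hik, if_pos hi0]
  · rw [digit_pow_sub hp (by omega) hc₀p hik, if_neg hi0]
  · omega
  · rw [digit_sub_one (by omega) hq0, if_pos (by omega), hq, digit_div_pow, zero_add]
  · rw [digit_sub_one (by omega) hq0, if_neg (by omega), hq, digit_div_pow, Nat.sub_add_cancel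
      (by omega)]

end Digits

section Admissible

variable {p c c' k : ℕ}

theorem range_subset_of_isAdmissible {I : Finset ℕ} (hI : IsAdmissible p c I) (h0 : 0 ∈ I)
    (hc : ∀ i, 1 ≤ i → i < k → digit p c i = p - 1) : Finset.range k ⊆ I := by
  intro i hi
  rw [Finset.mem_range] at hi
  induction i with
  | zero => exact h0
  | succ i ih =>
    by_contra hiI
    exact hI.2 (i + 1) hiI (by omega) (ih (by omega)) (hc (i + 1) (by omega) hi)

theorem disjoint_range_of_isAdmissible {J : Finset ℕ} (hJ : IsAdmissible p c J) (h0 : 0 ∉ J)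
    (hc : ∀ i, 1 ≤ i → i < k → digit p c i = 0) : Disjoint J (Finset.range k) := by
  rw [Finset.disjoint_right]
  intro i hi
  rw [Finset.mem_range] at hi
  induction i with
  | zero => exact h0
  | succ i ih =>
    intro hiJ
    exact hJ.1 (i + 1) hiJ (Or.inr (ih (by omega))) (hc (i + 1) (by omega) hi)

theorem IsAdmissible.sdiff_range {I : Finset ℕ} (hI : IsAdmissible p c' I)
    (hk : digit p c k ≠ 0) (hgt : ∀ i, k < i → digit p c' i = digit p c i) :
    IsAdmissible p c (I \ Finset.range k) := by
  simp only [IsAdmissible, Finset.mem_sdiff, Finset.mem_range, not_and, not_lt] at hI ⊢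
  refine ⟨fun i ⟨hiI, hik⟩ hprev => ?_, fun i hi hi1 ⟨hprevI, hprevk⟩ => ?_⟩
  · rcases hik.eq_or_lt with rfl | hik
    · exact hk
    · rw [← hgt i hik]
      exact hI.1 i hiI (Or.inr fun hmem => hprev.resolve_left (by omega) hmem (by omega))
  · rw [← hgt i (by omega)]
    exact hI.2 i (fun h => by have := hi h; omega) hi1 hprevI

theorem IsAdmissible.union_range {J : Finset ℕ} (hJ : IsAdmissible p c J)
    (h0 : digit p c' 0 ≠ 0) (hk : digit p c' k ≠ p - 1)
    (hgt : ∀ i, k < i → digit p c' i = digit p c i) :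
    IsAdmissible p c' (J ∪ Finset.range k) := by
  simp only [IsAdmissible, Finset.mem_union, Finset.mem_range, not_or, not_lt] at hJ ⊢
  refine ⟨fun i hi hprev => ?_, fun i ⟨hiJ, hik⟩ hi1 hprev => ?_⟩
  · rcases Nat.eq_zero_or_pos i with rfl | hi0
    · exact h0
    obtain ⟨hprevJ, hprevk⟩ := hprev.resolve_left (by omega)
    rw [hgt i (by omega)]
    exact hJ.1 i (hi.resolve_right (by omega)) (Or.inr hprevJ)
  · rcases hik.eq_or_lt with rfl | hik
    · exact hk
    · rw [hgt i hik]
      exact hJ.2 i hiJ hi1 (hprev.resolve_right (by omega))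

end Admissible

theorem admissible_bijection_general (p : ℕ) (hp : p.Prime)
    (c : ℕ) (hc0 : digit p c 0 ≠ 0)
    (k : ℕ) (hk1 : 1 ≤ k) (hk2 : digit p c k ≠ 0)
    (hkmin : ∀ j, 1 ≤ j → j < k → digit p c j = 0) :
    0 < c - 2 * digit p c 0 ∧
    (∀ I : Finset ℕ, IsAdmissible p (c - 2 * digit p c 0) I → 0 ∈ I →
      Finset.range k ⊆ I) ∧
    Set.BijOn (fun I : Finset ℕ => I \ Finset.range k)
      {I : Finset ℕ | IsAdmissible p (c - 2 * digit p c 0) I ∧ 0 ∈ I}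
      {J : Finset ℕ | IsAdmissible p c J ∧ 0 ∉ J} ∧
    Set.InvOn (fun J : Finset ℕ => J ∪ Finset.range k)
      (fun I : Finset ℕ => I \ Finset.range k)
      {I : Finset ℕ | IsAdmissible p (c - 2 * digit p c 0) I ∧ 0 ∈ I}
      {J : Finset ℕ | IsAdmissible p c J ∧ 0 ∉ J} := by
  have hdigit := digit_sub_two_mul_digit_zero hp.one_lt hc0 hk1 hk2 hkmin
  set c' := c - 2 * digit p c 0
  have hc₀p : digit p c 0 < p := Nat.mod_lt _ hp.pos
  have hckp : digit p c k < p := Nat.mod_lt _ hp.pos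
  have h0 : digit p c' 0 ≠ 0 := by rw [hdigit, if_pos rfl]; omega
  have hmid : ∀ i, 1 ≤ i → i < k → digit p c' i = p - 1 := fun i hi hik => by
    rw [hdigit, if_neg (by omega), if_pos hik]
  have hk : digit p c' k ≠ p - 1 := by
    rw [hdigit, if_neg (by omega), if_neg (lt_irrefl k), if_pos rfl]; omega
  have hgt : ∀ i, k < i → digit p c' i = digit p c i := fun i hik => by
    rw [hdigit, if_neg (by omega), if_neg (by omega), if_neg (by omega)]
  have hinv : Set.InvOn (· ∪ Finset.range k) (· \ Finset.range k)
      {I | IsAdmissible p c' I ∧ 0 ∈ I} {J | IsAdmissible p c J ∧ 0 ∉ J} :=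
    ⟨fun I ⟨hI, h0I⟩ => Finset.sdiff_union_of_subset (range_subset_of_isAdmissible hI h0I hmid),
      fun J ⟨hJ, h0J⟩ => Finset.union_sdiff_cancel_right
        (disjoint_range_of_isAdmissible hJ h0J hkmin)⟩
  refine ⟨Nat.pos_of_ne_zero fun h => h0 (by rw [h]; simp [digit]),
    fun I hI h0I => range_subset_of_isAdmissible hI h0I hmid, hinv.bijOn ?_ ?_, hinv⟩
  · exact fun I ⟨hI, _⟩ => ⟨hI.sdiff_range hk2 hgt, by simp [Nat.one_le_iff_ne_zero.mp hk1]⟩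
  · exact fun J ⟨hJ, _⟩ =>
      ⟨hJ.union_range h0 hk hgt, Finset.mem_union_right _ (Finset.mem_range.2 hk1)⟩

/-- Let `p` be an odd prime and `c` a positive integer with `c₀ = c mod p ≠ 0` having a
nonzero digit `c_j`, `j ≥ 1`; let `k` be minimal such `j` and `c' = c - 2c₀` (which is
positive). Then (1) every finite `c'`-admissible set containing `0` contains
`{0,…,k-1}`; (2) `I ↦ I \ {0,…,k-1}` is a bijection from the finite `c'`-admissible
sets containing `0` onto the finite `c`-admissible sets not containing `0`, with
inverse `J ↦ J ∪ {0,…,k-1}`. -/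
theorem admissible_bijection (p : ℕ) (hp : p.Prime) (hodd : Odd p)
    (c : ℕ) (hc : 0 < c) (hc0 : digit p c 0 ≠ 0)
    (k : ℕ) (hk1 : 1 ≤ k) (hk2 : digit p c k ≠ 0)
    (hkmin : ∀ j, 1 ≤ j → j < k → digit p c j = 0) :
    0 < c - 2 * digit p c 0 ∧
    (∀ I : Finset ℕ, IsAdmissible p (c - 2 * digit p c 0) I → 0 ∈ I →
      Finset.range k ⊆ I) ∧
    Set.BijOn (fun I : Finset ℕ => I \ Finset.range k)
      {I : Finset ℕ | IsAdmissible p (c - 2 * digit p c 0) I ∧ 0 ∈ I}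
      {J : Finset ℕ | IsAdmissible p c J ∧ 0 ∉ J} ∧
    Set.InvOn (fun J : Finset ℕ => J ∪ Finset.range k)
      (fun I : Finset ℕ => I \ Finset.range k)
      {I : Finset ℕ | IsAdmissible p (c - 2 * digit p c 0) I ∧ 0 ∈ I}
      {J : Finset ℕ | IsAdmissible p c J ∧ 0 ∉ J} :=
  admissible_bijection_general p hp c hc0 k hk1 hk2 hkmin
end
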